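/- arXiv:1303.7203 — 3 statements merged into one kernel-verified Lean document; each statement's English description precedes it below -/
import Mathlib

section
/- Let q ∈ k be a primitive n-th root of unity in a commutative ring k (with n invertible considerations as needed), and let X, Y be elements of an associative k-algebra satisfying YX = qXY. Then (X+Y)ⁿ = Xⁿ + Yⁿ. -/
open Finset

/-- q-binomial coefficients defined by the (quantum) Pascal recursion. -/
def qbinom {k : Type*} [Field k] (q : k) : ℕ → ℕ → k
  | 0, 0 => 1
  | 0, _+1 => 0
  | _+1, 0 => 1
  | n+1, j+1 => q ^ (n - j) * qbinom q n j + qbinom q n (j+1)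

lemma qbinom_zero_right {k : Type*} [Field k] (q : k) (n : ℕ) : qbinom q n 0 = 1 := by
  cases n <;> rfl

lemma qbinom_eq_zero_of_lt {k : Type*} [Field k] (q : k) :
    ∀ {n j : ℕ}, n < j → qbinom q n j = 0 := by
  intro n
  induction n with
  | zero => intro j hj; cases j with
    | zero => omega
    | succ j => rfl
  | succ n ih =>
    intro j hj
    cases j with
    | zero => omega
    | succ j =>
      show q ^ (n - j) * qbinom q n j + qbinom q n (j+1) = 0
      rw [ih (by omega), ih (by omega), mul_zero, add_zero]

lemma qbinom_diag {k : Type*} [Field k] (q : k) (n : ℕ) : qbinom q n n = 1 := by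
  induction n with
  | zero => rfl
  | succ n ih =>
    show q ^ (n - n) * qbinom q n n + qbinom q n (n+1) = 1
    rw [ih, qbinom_eq_zero_of_lt q (by omega)]
    simp

/-- Key product identity:
`qbinom q n j * ∏_{i<j} (1 - q^(i+1)) = ∏_{i<j} (1 - q^(n-i))`. -/
lemma qbinom_mul_prod {k : Type*} [Field k] (q : k) :
    ∀ n j : ℕ, qbinom q n j * ∏ i ∈ range j, (1 - q ^ (i+1))
      = ∏ i ∈ range j, (1 - q ^ (n - i)) := by
  intro n
  induction n with
  | zero =>
    intro j
    cases j with
    | zero => simp [qbinom]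
    | succ j =>
      rw [qbinom_eq_zero_of_lt q (by omega), zero_mul]
      rw [Finset.prod_range_succ']
      simp
  | succ n ih =>
    intro j
    cases j with
    | zero => simp [qbinom_zero_right]
    | succ j =>
      by_cases hjn : j ≤ n
      · show (q ^ (n - j) * qbinom q n j + qbinom q n (j+1)) * _ = _
        rw [Finset.prod_range_succ, Finset.prod_range_succ'] -- LHS peel last, RHS peel first
        have hN : ∀ i, (1 - q ^ (n + 1 - (i + 1))) = (1 - q ^ (n - i)) := by
          intro i; congr 2; omega
        simp only [hN]
        have h1 : qbinom q n j * ∏ i ∈ range j, (1 - q ^ (i+1))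
            = ∏ i ∈ range j, (1 - q ^ (n - i)) := ih j
        have h2 : qbinom q n (j+1) * ∏ i ∈ range (j+1), (1 - q ^ (i+1))
            = ∏ i ∈ range (j+1), (1 - q ^ (n - i)) := ih (j+1)
        rw [Finset.prod_range_succ, Finset.prod_range_succ] at h2
        simp only [Nat.sub_zero]
        have hpow : q ^ (n - j) * q ^ (j + 1) = q ^ (n + 1) := by
          rw [← pow_add]; congr 1; omega
        linear_combination (q ^ (n - j) * (1 - q ^ (j+1))) * h1 + h2
          - (∏ i ∈ range j, (1 - q ^ (n - i))) * hpow
        -- matches RHS:  (∏ i ∈ range j, f (i+1)) * f 0 with f i = 1 - q^(n+1-i)... check order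
      · -- j > n : both sides vanish
        rw [qbinom_eq_zero_of_lt q (by omega), zero_mul]
        symm
        apply Finset.prod_eq_zero (i := n + 1)
        · exact Finset.mem_range.mpr (by omega)
        · simp

/-- Middle q-binomial coefficients vanish at a primitive `n`-th root of unity. -/
lemma qbinom_mid_zero {k : Type*} [Field k] {q : k} {n : ℕ} (hq : IsPrimitiveRoot q n)
    {j : ℕ} (h0 : 0 < j) (hj : j < n) : qbinom q n j = 0 := by
  have hP := qbinom_mul_prod q n j
  have hzero : ∏ i ∈ range j, (1 - q ^ (n - i)) = 0 := by
    apply Finset.prod_eq_zero (Finset.mem_range.mpr h0)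
    rw [Nat.sub_zero, hq.pow_eq_one, sub_self]
  have hPne : ∏ i ∈ range j, (1 - q ^ (i+1)) ≠ 0 := by
    rw [Finset.prod_ne_zero_iff]
    intro i hi
    have hi' := Finset.mem_range.mp hi
    have : q ^ (i+1) ≠ 1 := hq.pow_ne_one_of_pos_of_lt (by omega) (by omega)
    exact fun hc => this (sub_eq_zero.mp hc).symm
  exact (mul_eq_zero.mp (hP.trans hzero)).resolve_right hPne

/-- The quantum binomial expansion. -/
lemma qbinom_expand {k : Type*} [Field k] {A : Type*} [Ring A] [Algebra k A]
    (q : k) (X Y : A) (h : Y * X = q • (X * Y)) :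
    ∀ n : ℕ, (X + Y) ^ n = ∑ j ∈ range (n+1), qbinom q n j • (X ^ j * Y ^ (n - j)) := by
  have hc : ∀ t : ℕ, Y ^ t * X = q ^ t • (X * Y ^ t) := by
    intro t
    induction t with
    | zero => simp
    | succ t ih =>
      calc Y ^ (t+1) * X = Y * (Y ^ t * X) := by rw [pow_succ', mul_assoc]
        _ = Y * (q ^ t • (X * Y ^ t)) := by rw [ih]
        _ = q ^ t • ((Y * X) * Y ^ t) := by rw [mul_smul_comm, mul_assoc]
        _ = q ^ t • ((q • (X * Y)) * Y ^ t) := by rw [h]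
        _ = q ^ (t+1) • (X * Y ^ (t+1)) := by
            rw [smul_mul_assoc, smul_smul, mul_assoc, ← pow_succ', ← pow_succ]
  intro n
  induction n with
  | zero => simp [qbinom]
  | succ n ih =>
    rw [pow_succ, ih, Finset.sum_mul]
    have step : ∀ j ∈ range (n+1), (qbinom q n j • (X ^ j * Y ^ (n-j))) * (X + Y)
        = (q ^ (n-j) * qbinom q n j) • (X ^ (j+1) * Y ^ (n-j))
          + qbinom q n j • (X ^ j * Y ^ (n+1-j)) := by
      intro j hj
      have hj' : j ≤ n := Nat.lt_succ_iff.mp (Finset.mem_range.mp hj)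
      have e1 : X ^ j * Y ^ (n-j) * X = q ^ (n-j) • (X ^ (j+1) * Y ^ (n-j)) := by
        rw [mul_assoc, hc (n-j), mul_smul_comm, ← mul_assoc, ← pow_succ]
      have e2 : X ^ j * Y ^ (n-j) * Y = X ^ j * Y ^ (n+1-j) := by
        rw [mul_assoc, ← pow_succ]
        congr 2
        omega
      rw [smul_mul_assoc, mul_add, e1, e2, smul_add, smul_smul, mul_comm (qbinom q n j)]
    rw [Finset.sum_congr rfl step, Finset.sum_add_distrib]
    have hRHS : ∑ j ∈ range (n+2), qbinom q (n+1) j • (X ^ j * Y ^ (n+1-j))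
        = (∑ j ∈ range (n+1), (q ^ (n-j) * qbinom q n j) • (X ^ (j+1) * Y ^ (n-j)))
          + ((∑ j ∈ range (n+1), qbinom q n (j+1) • (X ^ (j+1) * Y ^ (n-j))) + Y ^ (n+1)) := by
      rw [Finset.sum_range_succ']
      have hterm : ∀ j ∈ range (n+1), qbinom q (n+1) (j+1) • (X ^ (j+1) * Y ^ (n+1-(j+1)))
          = (q ^ (n-j) * qbinom q n j) • (X ^ (j+1) * Y ^ (n-j))
            + qbinom q n (j+1) • (X ^ (j+1) * Y ^ (n-j)) := by
        intro j hj
        have he : n+1-(j+1) = n-j := by omega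
        rw [he]
        show (q ^ (n-j) * qbinom q n j + qbinom q n (j+1)) • _ = _
        rw [add_smul]
      rw [Finset.sum_congr rfl hterm, Finset.sum_add_distrib, add_assoc]
      congr 1
      congr 1
      rw [qbinom_zero_right]
      simp
    rw [hRHS]
    congr 1
    rw [Finset.sum_range_succ']
    simp only [Nat.succ_sub_succ, qbinom_zero_right, pow_zero, one_mul, one_smul, Nat.sub_zero]
    congr 1
    symm
    rw [Finset.sum_range_succ, qbinom_eq_zero_of_lt q (by omega), zero_smul, add_zero]

/-- Quantum binomial theorem at a primitive root of unity: if `YX = qXY` with `q`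
a primitive `n`-th root of unity, then `(X+Y)ⁿ = Xⁿ + Yⁿ`. -/
theorem stmt3 {k : Type*} [Field k] [CharZero k]
    {A : Type*} [Ring A] [Algebra k A]
    {n : ℕ} (hn : 0 < n) (q : k) (hq : IsPrimitiveRoot q n)
    (X Y : A) (h : Y * X = q • (X * Y)) :
    (X + Y) ^ n = X ^ n + Y ^ n := by
  obtain ⟨m, rfl⟩ : ∃ m, n = m + 1 := ⟨n - 1, by omega⟩
  rw [qbinom_expand q X Y h (m+1), Finset.sum_range_succ, qbinom_diag, one_smul,
    Nat.sub_self, pow_zero, mul_one]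
  have hmid : ∑ j ∈ range (m+1), qbinom q (m+1) j • (X ^ j * Y ^ (m+1-j)) = Y ^ (m+1) := by
    rw [Finset.sum_eq_single 0]
    · simp [qbinom_zero_right]
    · intro j hj hj0
      rw [qbinom_mid_zero hq (by omega) (Finset.mem_range.mp hj), zero_smul]
    · intro h0
      exact absurd (Finset.mem_range.mpr (by omega)) h0
  rw [hmid, add_comm]
end

section
/- Let R = k⟨u,v⟩/(vu - uv - u²) be the Jordan plane over an algebraically closed field k of characteristic zero, and let σ be a finite-order linear automorphism of R (acting on the degree-1 part) with σ(vu - uv - u²) = vu - uv - u² in the free algebra. Then σ = ±id on the degree-1 component, i.e., σ(u) = εu, σ(v) = εv with ε = ±1. -/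
open TensorProduct

/-- A finite-order linear automorphism of the degree-one part of the Jordan plane
`k⟨u,v⟩/(vu - uv - u²)` fixing the relation `vu - uv - u²` in the tensor square
is `±id`. Here `u = (1,0)`, `v = (0,1)` in `k × k`. -/
theorem stmt6 {k : Type*} [Field k] [IsAlgClosed k] [CharZero k]
    (σ : (k × k) ≃ₗ[k] (k × k)) (hfin : IsOfFinOrder σ)
    (hrel : TensorProduct.map σ.toLinearMap σ.toLinearMap
        (((0, 1) : k × k) ⊗ₜ[k] ((1, 0) : k × k) -
          ((1, 0) : k × k) ⊗ₜ[k] ((0, 1) : k × k) -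
          ((1, 0) : k × k) ⊗ₜ[k] ((1, 0) : k × k)) =
      ((0, 1) : k × k) ⊗ₜ[k] ((1, 0) : k × k) -
        ((1, 0) : k × k) ⊗ₜ[k] ((0, 1) : k × k) -
        ((1, 0) : k × k) ⊗ₜ[k] ((1, 0) : k × k)) :
    ∃ ε : k, (ε = 1 ∨ ε = -1) ∧ σ ((1, 0) : k × k) = ε • ((1, 0) : k × k) ∧
      σ ((0, 1) : k × k) = ε • ((0, 1) : k × k) := by
  have key : ∀ p q : (k × k) →ₗ[k] k,
      p (σ (0,1)) * q (σ (1,0)) - p (σ (1,0)) * q (σ (0,1))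
        - p (σ (1,0)) * q (σ (1,0))
      = p (0,1) * q (1,0) - p (1,0) * q (0,1) - p (1,0) * q (1,0) := by
    intro p q
    have h := congrArg (fun z => (TensorProduct.lid k k) (TensorProduct.map p q z)) hrel
    simpa [map_sub, TensorProduct.map_tmul, TensorProduct.lid_tmul, smul_eq_mul] using h
  set a := (σ ((1,0):k×k)).1 with ha
  set b := (σ ((1,0):k×k)).2 with hbdef
  set c := (σ ((0,1):k×k)).1 with hc0
  set d := (σ ((0,1):k×k)).2 with hd0
  have h11 := key (LinearMap.fst k k k) (LinearMap.fst k k k)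
  have h22 := key (LinearMap.snd k k k) (LinearMap.snd k k k)
  have h12 := key (LinearMap.fst k k k) (LinearMap.snd k k k)
  simp only [LinearMap.fst_apply, LinearMap.snd_apply] at h11 h22 h12
  have ha2 : a * a = 1 := by linear_combination -h11
  have hb : b = 0 := by
    have : b * b = 0 := by linear_combination -h22
    exact mul_self_eq_zero.mp this
  have had : a * d = 1 := by linear_combination -h12 + (c - a) * hb
  have hd : d = a := by linear_combination a * had - d * ha2
  have hane : a ≠ 0 := by
    intro h; rw [h] at ha2; simp at ha2
  have hu : σ ((1,0):k×k) = (a, b) := rfl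
  have hv : σ ((0,1):k×k) = (c, d) := rfl
  have hσ : ∀ x y : k, σ (x, y) = (x*a + y*c, x*b + y*d) := by
    intro x y
    have hx : ((x, y) : k × k) = x • ((1,0):k×k) + y • ((0,1):k×k) := by
      simp [Prod.ext_iff]
    rw [hx, map_add, map_smul, map_smul, hu, hv]
    simp [Prod.ext_iff, smul_eq_mul]
  have hpow : ∀ m : ℕ, (σ^(2*m)) ((0,1):k×k) = (2*a*c*m, 1) := by
    intro m
    induction m with
    | zero => simp [Prod.ext_iff, hc0, hd0, hd]
    | succ m ih =>
      have hmul : ∀ (e f : (k×k) ≃ₗ[k] (k×k)) (x : k×k), (e * f) x = e (f x) :=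
        fun _ _ _ => rfl
      have hstep : (2*(m+1)) = 1 + (1 + 2*m) := by ring
      rw [hstep, pow_add, pow_add, pow_one, hmul, hmul, ih, hσ, hσ]
      simp only [Prod.mk.injEq]
      rw [hb, hd]
      constructor
      · push_cast
        linear_combination (2*a*c*(m:k)) * ha2
      · linear_combination ha2
  obtain ⟨n, hn, hσn⟩ := isOfFinOrder_iff_pow_eq_one.mp hfin
  have h2n : (σ^(2*n)) ((0,1):k×k) = (0, 1) := by
    rw [show 2*n = n*2 by ring, pow_mul, hσn, one_pow]
    rfl
  have hfirst : 2*a*c*(n:k) = 0 := by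
    have := hpow n
    rw [h2n] at this
    exact (Prod.mk.injEq _ _ _ _).mp this.symm |>.1
  have hc : c = 0 := by
    have hn0 : (n:k) ≠ 0 := Nat.cast_ne_zero.mpr hn.ne'
    have h2 : (2:k) ≠ 0 := two_ne_zero
    have : (2*a*(n:k)) * c = 0 := by linear_combination hfirst
    rcases mul_eq_zero.mp this with h | h
    · exact absurd h (mul_ne_zero (mul_ne_zero h2 hane) hn0)
    · exact h
  refine ⟨a, mul_self_eq_one_iff.mp ha2, ?_, ?_⟩
  · rw [hu, hb]; simp [Prod.ext_iff]
  · rw [hv, hc, hd]; simp [Prod.ext_iff]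
end

section
/- Let W = k⟨e₁₁, e₁₂, e₂₁⟩/(e₁₂e₁₁ − q e₁₁e₁₂, e₂₁e₁₁ − q e₁₁e₂₁, e₂₁e₁₂ − e₁₂e₂₁, e₁₁^{2m} − 1, e₁₂ᵐ, e₂₁ᵐ) where q has order 2m. Then W has k-linear basis {e₁₁ⁱ e₁₂ʲ e₂₁ˡ : 0 ≤ i ≤ 2m−1, 0 ≤ j, l ≤ m−1}, hence dim_k W = 2m³; moreover W is ℕ-graded with deg e₁₁ = 0, deg e₁₂ = deg e₂₁ = 1, and every two-sided ideal of W is graded. -/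
/-- The defining relations of
`W = k⟨e₁₁, e₁₂, e₂₁⟩/(e₁₂e₁₁ − qe₁₁e₁₂, e₂₁e₁₁ − qe₁₁e₂₁, e₂₁e₁₂ − e₁₂e₂₁,
e₁₁^{2m} − 1, e₁₂ᵐ, e₂₁ᵐ)`, with generators indexed `0 ↦ e₁₁`, `1 ↦ e₁₂`, `2 ↦ e₂₁`. -/
inductive WRel (k : Type*) [Field k] (q : k) (m : ℕ) :
    FreeAlgebra k (Fin 3) → FreeAlgebra k (Fin 3) → Prop
  | r1 : WRel k q m (FreeAlgebra.ι k 1 * FreeAlgebra.ι k 0)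
      (q • (FreeAlgebra.ι k 0 * FreeAlgebra.ι k (1 : Fin 3)))
  | r2 : WRel k q m (FreeAlgebra.ι k 2 * FreeAlgebra.ι k 0)
      (q • (FreeAlgebra.ι k 0 * FreeAlgebra.ι k (2 : Fin 3)))
  | r3 : WRel k q m (FreeAlgebra.ι k 2 * FreeAlgebra.ι k 1)
      (FreeAlgebra.ι k 1 * FreeAlgebra.ι k (2 : Fin 3))
  | r4 : WRel k q m ((FreeAlgebra.ι k (0 : Fin 3)) ^ (2 * m)) 1
  | r5 : WRel k q m ((FreeAlgebra.ι k (1 : Fin 3)) ^ m) 0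
  | r6 : WRel k q m ((FreeAlgebra.ι k (2 : Fin 3)) ^ m) 0

/-- The algebra `W` (the dual of the double Frobenius–Lusztig kernel
`u_{2,q}(sl₂)°`, presented as above). -/
abbrev Walg (k : Type*) [Field k] (q : k) (m : ℕ) := RingQuot (WRel k q m)

/-- The images of the generators `e₁₁, e₁₂, e₂₁` in `W`. -/
noncomputable def Wgen (k : Type*) [Field k] (q : k) (m : ℕ) (i : Fin 3) :
    Walg k q m :=
  RingQuot.mkAlgHom k (WRel k q m) (FreeAlgebra.ι k i)

/-!
The monomials `e₁₁ⁱ e₁₂ʲ e₂₁ˡ` span `W`: their span contains `1` and is stable under left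
multiplication by the generators, since the relations move a generator past `e₁₁ⁱ` at the cost of
a power of `q`, while `e₁₁^{2m} = 1` and `e₁₂ᵐ = e₂₁ᵐ = 0` bring the exponents back into range.
They are linearly independent because the same rules define an action of `W` on
`k^{2m × m × m}` carrying the monomials to the standard basis vectors.

Conjugation `f ↦ e₁₁⁻¹ f e₁₁` (with `e₁₁⁻¹ = e₁₁^{2m-1}`) multiplies a monomial of degree `d` by
`q^d`, and `0 ≤ d ≤ 2m - 2` gives distinct eigenvalues. Averaging
`q^{-ds} e₁₁^{-s} f e₁₁^s` over `s < 2m` therefore extracts the degree-`d` component of `f`,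
which thus lies in every two-sided ideal containing `f`.
-/

section RootsOfUnity

open Finset

variable {k M : Type*} [Field k] [AddCommGroup M] [Module k M] {ζ : k} {n : ℕ}

theorem IsPrimitiveRoot.sum_range_pow_sub_add_pow (hζ : IsPrimitiveRoot ζ n) {d e : ℕ}
    (hd : d < n) (he : e < n) :
    ∑ s ∈ range n, (ζ ^ (n - d + e)) ^ s = if e = d then (n : k) else 0 := by
  split_ifs with hed
  · rw [hed, Nat.sub_add_cancel hd.le, hζ.pow_eq_one]
    simp
  · have hne : ζ ^ (n - d + e) ≠ 1 := fun h => by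
      have := Nat.eq_of_dvd_of_lt_two_mul (by omega) ((hζ.pow_eq_one_iff_dvd _).1 h) (by omega)
      omega
    rw [geom_sum_eq hne, ← pow_mul, mul_comm, pow_mul, hζ.pow_eq_one, one_pow, sub_self,
      zero_div]

theorem IsPrimitiveRoot.mem_of_sum_mem (hζ : IsPrimitiveRoot ζ n) {N : Submodule k M}
    {φ : Module.End k M} (hφ : Set.MapsTo φ N N) {x : ℕ → M} (hx : ∀ e, φ (x e) = ζ ^ e • x e)
    (hsum : ∑ e ∈ range n, x e ∈ N) {d : ℕ} (hd : d < n) : x d ∈ N := by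
  have : NeZero n := ⟨by omega⟩
  have := hζ.neZero'
  have hpow (s e : ℕ) : (φ ^ s) (x e) = (ζ ^ e) ^ s • x e := by
    induction s with
    | zero => simp
    | succ s ih => rw [pow_succ', Module.End.mul_apply, ih, map_smul, hx, smul_smul, ← pow_succ]
  -- `ζ ^ (n - d) = ζ⁻¹ ^ d`, so this is the character-sum projection onto the `ζ ^ d`-eigenvector.
  have hproj : ∑ s ∈ range n, ζ ^ ((n - d) * s) • (φ ^ s) (∑ e ∈ range n, x e) = (n : k) • x d :=
    calc ∑ s ∈ range n, ζ ^ ((n - d) * s) • (φ ^ s) (∑ e ∈ range n, x e)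
        = ∑ e ∈ range n, (∑ s ∈ range n, (ζ ^ (n - d + e)) ^ s) • x e := by
          simp only [map_sum, hpow, smul_sum, smul_smul, sum_smul]
          rw [sum_comm]
          refine sum_congr rfl fun e _ => sum_congr rfl fun s _ => ?_
          rw [← pow_mul, ← pow_mul, ← pow_add, add_mul]
      _ = (n : k) • x d := by
          rw [sum_congr rfl fun e he => by
            rw [hζ.sum_range_pow_sub_add_pow hd (mem_range.1 he), ite_smul, zero_smul]]
          simp [hd]
  have hmem : (n : k) • x d ∈ N := hproj ▸ N.sum_mem fun s _ =>
    N.smul_mem _ (by rw [Module.End.pow_apply]; exact (hφ.iterate s) hsum)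
  simpa [NeZero.ne] using N.smul_mem (n : k)⁻¹ hmem

theorem IsPrimitiveRoot.sum_filter_repr_smul_mem {ι : Type*} [Fintype ι]
    (hζ : IsPrimitiveRoot ζ n) {N : Submodule k M} {φ : Module.End k M} (hφ : Set.MapsTo φ N N)
    (B : Module.Basis ι k M) (deg : ι → ℕ) (hdeg : ∀ p, deg p < n)
    (hB : ∀ p, φ (B p) = ζ ^ deg p • B p) {f : M} (hf : f ∈ N) (d : ℕ) :
    ∑ p ∈ univ.filter (fun p => deg p = d), B.repr f p • B p ∈ N := by
  by_cases hd : d < n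
  · refine hζ.mem_of_sum_mem hφ (x := fun e => ∑ p ∈ univ.filter (fun p => deg p = e),
      B.repr f p • B p) (fun e => ?_) ?_ hd
    · simp only [map_sum, map_smul, hB, smul_sum]
      refine sum_congr rfl fun p hp => ?_
      rw [(mem_filter.1 hp).2, smul_comm]
    · rwa [sum_fiberwise_of_maps_to (fun p _ => mem_range.2 (hdeg p)), B.sum_repr]
  · rw [filter_false_of_mem fun p _ => by have := hdeg p; omega, sum_empty]
    exact N.zero_mem

end RootsOfUnity

section QCommute

variable {R A : Type*} [CommSemiring R] [Semiring A] [Algebra R A] {a b : A} {c : R}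

theorem mul_pow_eq_smul_pow_mul (h : a * b = c • (b * a)) (i : ℕ) :
    a * b ^ i = c ^ i • (b ^ i * a) := by
  induction i with
  | zero => simp
  | succ i ih =>
    rw [pow_succ, ← mul_assoc, ih, smul_mul_assoc, mul_assoc, h, mul_smul_comm, smul_smul,
      ← mul_assoc, ← pow_succ, ← pow_succ]

theorem pow_mul_eq_smul_mul_pow (h : a * b = c • (b * a)) (i : ℕ) :
    a ^ i * b = c ^ i • (b * a ^ i) := by
  induction i with
  | zero => simp
  | succ i ih =>
    rw [pow_succ', mul_assoc, ih, mul_smul_comm, ← mul_assoc, h, smul_mul_assoc, smul_smul,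
      mul_assoc, ← pow_succ', ← pow_succ]

theorem Submodule.eq_top_of_one_mem_of_le_comap_mulLeft {s : Set A} (hs : Algebra.adjoin R s = ⊤)
    {S : Submodule R A} (h1 : (1 : A) ∈ S) (hmul : ∀ a ∈ s, S ≤ S.comap (LinearMap.mulLeft R a)) :
    S = ⊤ := by
  have key (x : A) (hx : x ∈ Algebra.adjoin R s) : ∀ y ∈ S, x * y ∈ S := by
    induction hx using Algebra.adjoin_induction with
    | mem a ha => exact fun y hy => hmul a ha hy
    | algebraMap r => exact fun y hy => by rw [← Algebra.smul_def]; exact S.smul_mem r hy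
    | add x z _ _ hx hz => exact fun y hy => by rw [add_mul]; exact S.add_mem (hx y hy) (hz y hy)
    | mul x z _ _ hx hz => exact fun y hy => by rw [mul_assoc]; exact hx _ (hz y hy)
  exact eq_top_iff.2 fun x _ => by simpa using key x (hs ▸ Algebra.mem_top) 1 h1

end QCommute

namespace Walg

variable {k : Type*} [Field k] {q : k} {m : ℕ}

local notation "e₁₁" => Wgen k q m 0
local notation "e₁₂" => Wgen k q m 1
local notation "e₂₁" => Wgen k q m 2

section Relations

variable (q m)

theorem e₁₂_mul_e₁₁ : e₁₂ * e₁₁ = q • (e₁₁ * e₁₂) := by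
  simpa [Wgen] using RingQuot.mkAlgHom_rel k (WRel.r1 (q := q) (m := m))

theorem e₂₁_mul_e₁₁ : e₂₁ * e₁₁ = q • (e₁₁ * e₂₁) := by
  simpa [Wgen] using RingQuot.mkAlgHom_rel k (WRel.r2 (q := q) (m := m))

theorem e₂₁_mul_e₁₂ : e₂₁ * e₁₂ = e₁₂ * e₂₁ := by
  simpa [Wgen] using RingQuot.mkAlgHom_rel k (WRel.r3 (q := q) (m := m))

theorem e₁₁_pow_two_mul : e₁₁ ^ (2 * m) = 1 := by
  simpa [Wgen] using RingQuot.mkAlgHom_rel k (WRel.r4 (q := q) (m := m))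

theorem e₁₂_pow : e₁₂ ^ m = 0 := by
  simpa [Wgen] using RingQuot.mkAlgHom_rel k (WRel.r5 (q := q) (m := m))

theorem e₂₁_pow : e₂₁ ^ m = 0 := by
  simpa [Wgen] using RingQuot.mkAlgHom_rel k (WRel.r6 (q := q) (m := m))

end Relations

theorem adjoin_range_Wgen : Algebra.adjoin k (Set.range (Wgen k q m)) = ⊤ := by
  rw [show Set.range (Wgen k q m) = RingQuot.mkAlgHom k (WRel k q m) '' Set.range (FreeAlgebra.ι k)
      by rw [← Set.range_comp]; rfl, ← AlgHom.map_adjoin, FreeAlgebra.adjoin_range_ι,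
    Algebra.map_top, AlgHom.range_eq_top]
  exact RingQuot.mkAlgHom_surjective k _

variable (q m) in
noncomputable def mono (i j l : ℕ) : Walg k q m := e₁₁ ^ i * e₁₂ ^ j * e₂₁ ^ l

theorem e₁₁_mul_mono (i j l : ℕ) : e₁₁ * mono q m i j l = mono q m (i + 1) j l := by
  simp only [mono, ← mul_assoc, ← pow_succ']

theorem e₁₂_mul_mono (i j l : ℕ) : e₁₂ * mono q m i j l = q ^ i • mono q m i (j + 1) l := by
  rw [mono, mono, ← mul_assoc, ← mul_assoc, mul_pow_eq_smul_pow_mul (e₁₂_mul_e₁₁ q m),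
    smul_mul_assoc, smul_mul_assoc, mul_assoc _ e₁₂, ← pow_succ']

theorem e₂₁_mul_mono (i j l : ℕ) : e₂₁ * mono q m i j l = q ^ i • mono q m i j (l + 1) := by
  rw [mono, mono, ← mul_assoc, ← mul_assoc, mul_pow_eq_smul_pow_mul (e₂₁_mul_e₁₁ q m),
    smul_mul_assoc, smul_mul_assoc, mul_assoc _ e₂₁, (Commute.pow_right (e₂₁_mul_e₁₂ q m) j).eq, ← mul_assoc,
    mul_assoc _ e₂₁, ← pow_succ']

theorem mono_mul_e₁₁ (i j l : ℕ) : mono q m i j l * e₁₁ = q ^ (j + l) • mono q m (i + 1) j l := by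
  rw [mono, mono, mul_assoc, pow_mul_eq_smul_mul_pow (e₂₁_mul_e₁₁ q m), mul_smul_comm, ← mul_assoc,
    mul_assoc _ _ e₁₁, pow_mul_eq_smul_mul_pow (e₁₂_mul_e₁₁ q m), mul_smul_comm, smul_mul_assoc,
    smul_smul, ← mul_assoc, ← pow_succ, ← pow_add, add_comm l j]

theorem mono_mod (i j l : ℕ) : mono q m (i % (2 * m)) j l = mono q m i j l := by
  rw [mono, mono, ← pow_eq_pow_mod i (e₁₁_pow_two_mul q m)]

theorem mono_eq_zero_of_le_left {j : ℕ} (hj : m ≤ j) (i l : ℕ) : mono q m i j l = 0 := by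
  rw [mono, ← Nat.add_sub_cancel' hj, pow_add, e₁₂_pow q m, zero_mul, mul_zero, zero_mul]

theorem mono_eq_zero_of_le_right {l : ℕ} (hl : m ≤ l) (i j : ℕ) : mono q m i j l = 0 := by
  rw [mono, ← Nat.add_sub_cancel' hl, pow_add, e₂₁_pow q m, zero_mul, mul_zero]

theorem e₁₁_pow_mul_mono_mul_e₁₁ (hm : 0 < m) (i j l : ℕ) :
    e₁₁ ^ (2 * m - 1) * mono q m i j l * e₁₁ = q ^ (j + l) • mono q m i j l := by
  rw [mul_assoc, mono_mul_e₁₁, mul_smul_comm, mono, ← mul_assoc, ← mul_assoc, ← pow_add,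
    show 2 * m - 1 + (i + 1) = 2 * m + i by omega, pow_add e₁₁, e₁₁_pow_two_mul q m, one_mul]
  rfl

theorem span_range_mono_nat :
    Submodule.span k (Set.range fun p : ℕ × ℕ × ℕ => mono q m p.1 p.2.1 p.2.2) = ⊤ := by
  refine Submodule.eq_top_of_one_mem_of_le_comap_mulLeft adjoin_range_Wgen
    (Submodule.subset_span ⟨(0, 0, 0), by simp [mono]⟩) ?_
  rintro _ ⟨t, rfl⟩
  refine Submodule.span_le.2 (Set.range_subset_iff.2 fun ⟨i, j, l⟩ => ?_)
  simp only [SetLike.mem_coe, Submodule.mem_comap, LinearMap.mulLeft_apply]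
  match t with
  | 0 => exact Submodule.subset_span ⟨(i + 1, j, l), (e₁₁_mul_mono i j l).symm⟩
  | 1 =>
    rw [e₁₂_mul_mono]
    exact Submodule.smul_mem _ _ (Submodule.subset_span ⟨(i, j + 1, l), rfl⟩)
  | 2 =>
    rw [e₂₁_mul_mono]
    exact Submodule.smul_mem _ _ (Submodule.subset_span ⟨(i, j, l + 1), rfl⟩)

theorem span_range_mono :
    Submodule.span k (Set.range fun p : Fin (2 * m) × Fin m × Fin m => mono q m p.1 p.2.1 p.2.2)
      = ⊤ := by
  refine eq_top_iff.2 (span_range_mono_nat.symm.le.trans (Submodule.span_le.2 ?_))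
  rintro _ ⟨⟨i, j, l⟩, rfl⟩
  by_cases hjl : j < m ∧ l < m
  · refine Submodule.subset_span ⟨(⟨i % (2 * m), Nat.mod_lt _ (by omega)⟩, ⟨j, hjl.1⟩,
      ⟨l, hjl.2⟩), mono_mod i j l⟩
  · rcases not_and_or.1 hjl with hj | hl
    · simp [mono_eq_zero_of_le_left (not_lt.1 hj)]
    · simp [mono_eq_zero_of_le_right (not_lt.1 hl)]

variable (k m) in
noncomputable def modelVec (i j l : ℕ) : Fin (2 * m) × Fin m × Fin m → k :=
  if h : j < m ∧ l < m then Pi.single (⟨i % (2 * m), Nat.mod_lt _ (by omega)⟩, ⟨j, h.1⟩, ⟨l, h.2⟩) 1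
  else 0

theorem modelVec_eq_basisFun {i j l : ℕ} (h : j < m ∧ l < m) :
    modelVec k m i j l =
      Pi.basisFun k _ (⟨i % (2 * m), Nat.mod_lt _ (by omega)⟩, ⟨j, h.1⟩, ⟨l, h.2⟩) := by
  simp [modelVec, h]

theorem modelVec_of_not_lt {i j l : ℕ} (h : ¬ (j < m ∧ l < m)) : modelVec k m i j l = 0 :=
  dif_neg h

theorem modelVec_mod_eq {i i' : ℕ} (h : i % (2 * m) = i' % (2 * m)) (j l : ℕ) :
    modelVec k m i j l = modelVec k m i' j l := by
  simp [modelVec, h]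

theorem basisFun_eq_modelVec (p : Fin (2 * m) × Fin m × Fin m) :
    Pi.basisFun k _ p = modelVec k m p.1 p.2.1 p.2.2 := by
  rw [modelVec_eq_basisFun ⟨p.2.1.isLt, p.2.2.isLt⟩]
  simp [Nat.mod_eq_of_lt p.1.isLt]

theorem ext_modelVec {T T' : Module.End k (Fin (2 * m) × Fin m × Fin m → k)}
    (h : ∀ i j l, T (modelVec k m i j l) = T' (modelVec k m i j l)) : T = T' :=
  (Pi.basisFun k _).ext fun p => by rw [basisFun_eq_modelVec]; exact h _ _ _

variable (k m) in
noncomputable def modelE₁₁ : Module.End k (Fin (2 * m) × Fin m × Fin m → k) :=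
  (Pi.basisFun k _).constr k fun p => modelVec k m (p.1 + 1) p.2.1 p.2.2

variable (m) in
noncomputable def modelE₁₂ (q : k) : Module.End k (Fin (2 * m) × Fin m × Fin m → k) :=
  (Pi.basisFun k _).constr k fun p => q ^ (p.1 : ℕ) • modelVec k m p.1 (p.2.1 + 1) p.2.2

variable (m) in
noncomputable def modelE₂₁ (q : k) : Module.End k (Fin (2 * m) × Fin m × Fin m → k) :=
  (Pi.basisFun k _).constr k fun p => q ^ (p.1 : ℕ) • modelVec k m p.1 p.2.1 (p.2.2 + 1)

theorem modelE₁₁_modelVec (i j l : ℕ) :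
    modelE₁₁ k m (modelVec k m i j l) = modelVec k m (i + 1) j l := by
  by_cases h : j < m ∧ l < m
  · rw [modelVec_eq_basisFun h, modelE₁₁, Module.Basis.constr_basis]
    exact modelVec_mod_eq (Nat.mod_add_mod _ _ _) _ _
  · rw [modelVec_of_not_lt h, modelVec_of_not_lt h, map_zero]

theorem modelE₁₂_modelVec (hq : q ^ (2 * m) = 1) (i j l : ℕ) :
    modelE₁₂ m q (modelVec k m i j l) = q ^ i • modelVec k m i (j + 1) l := by
  by_cases h : j < m ∧ l < m
  · rw [modelVec_eq_basisFun h, modelE₁₂, Module.Basis.constr_basis, ← pow_eq_pow_mod i hq]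
    exact congrArg _ (modelVec_mod_eq (Nat.mod_mod _ _) _ _)
  · rw [modelVec_of_not_lt h, modelVec_of_not_lt (by omega), map_zero, smul_zero]

theorem modelE₂₁_modelVec (hq : q ^ (2 * m) = 1) (i j l : ℕ) :
    modelE₂₁ m q (modelVec k m i j l) = q ^ i • modelVec k m i j (l + 1) := by
  by_cases h : j < m ∧ l < m
  · rw [modelVec_eq_basisFun h, modelE₂₁, Module.Basis.constr_basis, ← pow_eq_pow_mod i hq]
    exact congrArg _ (modelVec_mod_eq (Nat.mod_mod _ _) _ _)
  · rw [modelVec_of_not_lt h, modelVec_of_not_lt (by omega), map_zero, smul_zero]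

theorem modelE₁₁_pow_modelVec (s i j l : ℕ) :
    (modelE₁₁ k m ^ s) (modelVec k m i j l) = modelVec k m (i + s) j l := by
  induction s with
  | zero => rfl
  | succ s ih => rw [pow_succ', Module.End.mul_apply, ih, modelE₁₁_modelVec, add_assoc]

theorem modelE₁₂_pow_modelVec (hq : q ^ (2 * m) = 1) (s i j l : ℕ) :
    (modelE₁₂ m q ^ s) (modelVec k m i j l) = q ^ (i * s) • modelVec k m i (j + s) l := by
  induction s with
  | zero => simp
  | succ s ih =>
    rw [pow_succ', Module.End.mul_apply, ih, map_smul, modelE₁₂_modelVec hq, smul_smul,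
      ← pow_add, mul_add_one, add_assoc]

theorem modelE₂₁_pow_modelVec (hq : q ^ (2 * m) = 1) (s i j l : ℕ) :
    (modelE₂₁ m q ^ s) (modelVec k m i j l) = q ^ (i * s) • modelVec k m i j (l + s) := by
  induction s with
  | zero => simp
  | succ s ih =>
    rw [pow_succ', Module.End.mul_apply, ih, map_smul, modelE₂₁_modelVec hq, smul_smul,
      ← pow_add, mul_add_one, add_assoc]

noncomputable def modelRep (hq : q ^ (2 * m) = 1) :
    Walg k q m →ₐ[k] Module.End k (Fin (2 * m) × Fin m × Fin m → k) :=
  RingQuot.liftAlgHom k ⟨FreeAlgebra.lift k ![modelE₁₁ k m, modelE₁₂ m q, modelE₂₁ m q], by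
    rintro _ _ ⟨⟩ <;> simp only [map_mul, map_pow, map_smul, map_one, map_zero,
      FreeAlgebra.lift_ι_apply] <;> refine ext_modelVec fun i j l => ?_
    · simp [modelE₁₁_modelVec, modelE₁₂_modelVec hq, smul_smul, pow_succ']
    · simp [modelE₁₁_modelVec, modelE₂₁_modelVec hq, smul_smul, pow_succ']
    · simp [modelE₁₂_modelVec hq, modelE₂₁_modelVec hq, smul_smul]
    · simp [modelE₁₁_pow_modelVec, modelVec_mod_eq (Nat.add_mod_right i (2 * m))]
    · simp [modelE₁₂_pow_modelVec hq, modelVec_of_not_lt]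
    · simp [modelE₂₁_pow_modelVec hq, modelVec_of_not_lt]⟩

theorem modelRep_Wgen (hq : q ^ (2 * m) = 1) (t : Fin 3) :
    modelRep hq (Wgen k q m t) = ![modelE₁₁ k m, modelE₁₂ m q, modelE₂₁ m q] t :=
  (RingQuot.liftAlgHom_mkAlgHom_apply _ _ _ _).trans (FreeAlgebra.lift_ι_apply _ _)

theorem modelRep_mono_modelVec_zero (hq : q ^ (2 * m) = 1) (i j l : ℕ) :
    modelRep hq (mono q m i j l) (modelVec k m 0 0 0) = modelVec k m i j l := by
  simp [mono, modelRep_Wgen, modelE₁₁_pow_modelVec, modelE₁₂_pow_modelVec hq,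
    modelE₂₁_pow_modelVec hq]

theorem linearIndependent_mono (hq : q ^ (2 * m) = 1) :
    LinearIndependent k fun p : Fin (2 * m) × Fin m × Fin m => mono q m p.1 p.2.1 p.2.2 := by
  refine .of_comp ((LinearMap.applyₗ (modelVec k m 0 0 0)).comp (modelRep hq).toLinearMap) ?_
  convert (Pi.basisFun k (Fin (2 * m) × Fin m × Fin m)).linearIndependent using 1
  funext p
  exact (modelRep_mono_modelVec_zero hq _ _ _).trans (basisFun_eq_modelVec p).symm

noncomputable def monoBasis (hq : q ^ (2 * m) = 1) :
    Module.Basis (Fin (2 * m) × Fin m × Fin m) k (Walg k q m) :=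
  .mk (linearIndependent_mono hq) span_range_mono.ge

theorem monoBasis_apply (hq : q ^ (2 * m) = 1) (p : Fin (2 * m) × Fin m × Fin m) :
    monoBasis hq p = mono q m p.1 p.2.1 p.2.2 :=
  Module.Basis.mk_apply _ _ _

end Walg

theorem stmt18_general {k : Type*} [Field k] (m : ℕ)
    (q : k) (hq : IsPrimitiveRoot q (2 * m)) :
    ∃ B : Module.Basis (Fin (2 * m) × Fin m × Fin m) k (Walg k q m),
      (∀ p : Fin (2 * m) × Fin m × Fin m,
        B p = Wgen k q m 0 ^ (p.1 : ℕ) * Wgen k q m 1 ^ (p.2.1 : ℕ) *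
          Wgen k q m 2 ^ (p.2.2 : ℕ)) ∧
      Module.finrank k (Walg k q m) = 2 * m ^ 3 ∧
      ∀ I : TwoSidedIdeal (Walg k q m), ∀ f ∈ I, ∀ d : ℕ,
        (∑ p ∈ Finset.univ.filter
            (fun p : Fin (2 * m) × Fin m × Fin m => (p.2.1 : ℕ) + (p.2.2 : ℕ) = d),
          B.repr f p • B p) ∈ I := by
  have hq1 : q ^ (2 * m) = 1 := hq.pow_eq_one
  refine ⟨Walg.monoBasis hq1, Walg.monoBasis_apply hq1, ?_, fun I f hf d => ?_⟩
  · rw [Module.finrank_eq_card_basis (Walg.monoBasis hq1)]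
    simp only [Fintype.card_prod, Fintype.card_fin]
    ring
  · refine hq.sum_filter_repr_smul_mem (N := I.asIdeal.restrictScalars k)
      (φ := LinearMap.mulLeftRight k (Wgen k q m 0 ^ (2 * m - 1), Wgen k q m 0))
      (fun x hx => I.mul_mem_right _ _ (I.mul_mem_left _ _ hx)) (Walg.monoBasis hq1)
      (fun p => p.2.1 + p.2.2) (fun p => by omega) (fun p => ?_) hf d
    rw [LinearMap.mulLeftRight_apply, Walg.monoBasis_apply, Walg.e₁₁_pow_mul_mono_mul_e₁₁ p.2.1.pos]

/-- `W` has `k`-basis `{e₁₁ⁱ e₁₂ʲ e₂₁ˡ : 0 ≤ i < 2m, 0 ≤ j, l < m}`, hence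
`dim_k W = 2m³`; moreover (with respect to the grading `deg e₁₁ = 0`,
`deg e₁₂ = deg e₂₁ = 1`) every two-sided ideal of `W` is graded: it contains all
homogeneous components of each of its elements. -/
theorem stmt18 {k : Type*} [Field k] (m : ℕ) (hm : 0 < m)
    (q : k) (hq : IsPrimitiveRoot q (2 * m)) :
    ∃ B : Module.Basis (Fin (2 * m) × Fin m × Fin m) k (Walg k q m),
      (∀ p : Fin (2 * m) × Fin m × Fin m,
        B p = Wgen k q m 0 ^ (p.1 : ℕ) * Wgen k q m 1 ^ (p.2.1 : ℕ) *
          Wgen k q m 2 ^ (p.2.2 : ℕ)) ∧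
      Module.finrank k (Walg k q m) = 2 * m ^ 3 ∧
      ∀ I : TwoSidedIdeal (Walg k q m), ∀ f ∈ I, ∀ d : ℕ,
        (∑ p ∈ Finset.univ.filter
            (fun p : Fin (2 * m) × Fin m × Fin m => (p.2.1 : ℕ) + (p.2.2 : ℕ) = d),
          B.repr f p • B p) ∈ I :=
  stmt18_general m q hq
end
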